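/- arXiv:math/0209308 — 3 statements merged into one kernel-verified Lean document; each statement's English description precedes it below -/
import Mathlib

section
/- Let (R, m) be a Noetherian local ring, I an ideal of R containing a non-zerodivisor, x ∈ I a non-zerodivisor, and r ≥ 0 an integer with I^{r+1} = xI^r. Then for every integer j ≥ r one has ~(I^j) = I^j, and consequently ~(I^{m+1}) = x·~(I^m) for every m ≥ r. (In particular, with s(I) the smallest integer such that ~(I^n) = I^n for all n ≥ s(I), and ~r(I) the Ratliff-Rush reduction number, one gets s(I) ≤ r(I) and ~r(I) ≤ r(I).) -/
/-- The Ratliff-Rush closure of the power `I^n`:  `⋃_{k≥0} (I^{n+k} : I^k)`. -/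
noncomputable def rrPow {R : Type*} [CommRing R] (I : Ideal R) (n : ℕ) : Ideal R :=
  ⨆ k : ℕ, (I ^ (n + k)).colon ((I ^ k : Ideal R) : Set R)

/-!
Once `I^{j+1} = x I^j`, induction gives `I^{j+k} = x^k I^j`. If `a I^k ⊆ I^{j+k}`, then in
particular `a x^k ∈ x^k I^j`, and cancelling the non-zerodivisor `x^k` puts `a` in `I^j`.
-/

section

variable {R : Type*} [CommRing R]

theorem Ideal.pow_succ_eq_mul_of_le {I J : Ideal R} {r : ℕ} (hr : I ^ (r + 1) = J * I ^ r)
    {j : ℕ} (hj : r ≤ j) : I ^ (j + 1) = J * I ^ j := by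
  obtain ⟨t, rfl⟩ := Nat.exists_eq_add_of_le hj
  calc I ^ (r + t + 1) = I ^ (r + 1) * I ^ t := by ring
    _ = J * I ^ (r + t) := by rw [hr, mul_assoc, ← pow_add]

theorem Ideal.pow_add_eq_of_le {I J : Ideal R} {r : ℕ} (hr : I ^ (r + 1) = J * I ^ r)
    {j : ℕ} (hj : r ≤ j) (k : ℕ) : I ^ (j + k) = J ^ k * I ^ j := by
  induction k with
  | zero => simp
  | succ k ih =>
    rw [← add_assoc, pow_succ_eq_mul_of_le hr (hj.trans (j.le_add_right k)), ih, pow_succ',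
      mul_assoc]

theorem Ideal.mem_of_mul_mem_span_singleton_mul {J : Ideal R} {a y : R}
    (hy : y ∈ nonZeroDivisors R) (h : a * y ∈ Ideal.span {y} * J) : a ∈ J := by
  obtain ⟨b, hb, hba⟩ := Ideal.mem_span_singleton_mul.mp h
  have hab : b = a := (mul_cancel_right_mem_nonZeroDivisors hy).mp (by rwa [mul_comm] at hba)
  rwa [← hab]

theorem pow_le_rrPow (I : Ideal R) (n : ℕ) : I ^ n ≤ rrPow I n := by
  refine le_trans (fun a ha => ?_) (le_iSup _ 0)
  rw [Submodule.mem_colon]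
  intro p _
  simpa using Ideal.mul_mem_right p _ ha

theorem rrPow_le_pow_of_pow_add_eq {I : Ideal R} {x : R} (hxI : x ∈ I)
    (hx : x ∈ nonZeroDivisors R) {n : ℕ}
    (h : ∀ k, I ^ (n + k) = Ideal.span {x} ^ k * I ^ n) : rrPow I n ≤ I ^ n := by
  refine iSup_le fun k a ha => Ideal.mem_of_mul_mem_span_singleton_mul (pow_mem hx k) ?_
  have hax : a • x ^ k ∈ I ^ (n + k) := Submodule.mem_colon.mp ha _ (Ideal.pow_mem_pow hxI k)
  rwa [h, Ideal.span_singleton_pow] at hax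

end

theorem stmt_6_general (R : Type*) [CommRing R]
    (I : Ideal R)
    (x : R) (hxI : x ∈ I) (hx : x ∈ nonZeroDivisors R)
    (r : ℕ) (hr : I ^ (r + 1) = Ideal.span {x} * I ^ r) :
    (∀ j : ℕ, r ≤ j → rrPow I j = I ^ j) ∧
    (∀ m : ℕ, r ≤ m → rrPow I (m + 1) = Ideal.span {x} * rrPow I m) := by
  have stable : ∀ j : ℕ, r ≤ j → rrPow I j = I ^ j := fun j hj =>
    (rrPow_le_pow_of_pow_add_eq hxI hx (Ideal.pow_add_eq_of_le hr hj)).antisymm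
      (pow_le_rrPow I j)
  refine ⟨stable, fun m hm => ?_⟩
  rw [stable (m + 1) (hm.trans m.le_succ), stable m hm, Ideal.pow_succ_eq_mul_of_le hr hm]

/-- Let `(R,m)` be Noetherian local, `I` a regular ideal, `x ∈ I` a non-zerodivisor, and
`r ≥ 0` with `I^{r+1} = xI^r`.  Then `~(I^j) = I^j` for every `j ≥ r`, and consequently
`~(I^{m+1}) = x·~(I^m)` for every `m ≥ r` (so that `s(I) ≤ r(I)` and `~r(I) ≤ r(I)`). -/
theorem stmt_6 (R : Type*) [CommRing R] [IsNoetherianRing R] [IsLocalRing R]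
    (I : Ideal R) (hreg : ∃ y ∈ I, y ∈ nonZeroDivisors R)
    (x : R) (hxI : x ∈ I) (hx : x ∈ nonZeroDivisors R)
    (r : ℕ) (hr : I ^ (r + 1) = Ideal.span {x} * I ^ r) :
    (∀ j : ℕ, r ≤ j → rrPow I j = I ^ j) ∧
    (∀ m : ℕ, r ≤ m → rrPow I (m + 1) = Ideal.span {x} * rrPow I m) :=
  stmt_6_general R I x hxI hx r hr
end

section
/- Let F be a field and I = (X^{10}, Y^5, XY^4, X^8Y) in F[X,Y]. Then X^7Y^3·I ⊆ I^2 and X^7Y^3 ∉ I; hence X^7Y^3 ∈ ~I \ I and I is not Ratliff-Rush closed. (Thus a zero-dimensional monomial ideal of F[X,Y] generated by 4 = 2 + 2 monomials need not be Ratliff-Rush closed.) -/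
theorem colon_le_rrPow {R : Type*} [CommRing R] (I : Ideal R) (n k : ℕ) :
    (I ^ (n + k)).colon ((I ^ k : Ideal R) : Set R) ≤ rrPow I n :=
  le_iSup (fun k => (I ^ (n + k)).colon ((I ^ k : Ideal R) : Set R)) k

theorem mem_rrPow_of_forall_mul_mem {R : Type*} [CommRing R] {I : Ideal R} {n : ℕ} (k : ℕ)
    {x : R} (h : ∀ f ∈ I ^ k, x * f ∈ I ^ (n + k)) : x ∈ rrPow I n :=
  colon_le_rrPow I n k (Submodule.mem_colon.mpr h)

theorem Ideal.mul_mem_of_forall_mul_mem_generators {R : Type*} [CommRing R] {J : Ideal R}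
    {S : Set R} {x : R} (h : ∀ g ∈ S, x * g ∈ J) : ∀ f ∈ Ideal.span S, x * f ∈ J := by
  have hx : x ∈ J.colon (Ideal.span S : Set R) := by
    rwa [Submodule.colon_span, Submodule.mem_colon]
  exact Submodule.mem_colon.mp hx

theorem pow_seven_mul_pow_three_mul_mem_span_sq {R : Type*} [CommRing R] (x y : R) :
    ∀ f ∈ Ideal.span {x ^ 10, y ^ 5, x * y ^ 4, x ^ 8 * y},
      x ^ 7 * y ^ 3 * f ∈ (Ideal.span {x ^ 10, y ^ 5, x * y ^ 4, x ^ 8 * y}) ^ 2 := by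
  set I := Ideal.span {x ^ 10, y ^ 5, x * y ^ 4, x ^ 8 * y}
  have hx10 : x ^ 10 ∈ I := Ideal.subset_span (by simp)
  have hy5 : y ^ 5 ∈ I := Ideal.subset_span (by simp)
  have hxy4 : x * y ^ 4 ∈ I := Ideal.subset_span (by simp)
  have hx8y : x ^ 8 * y ∈ I := Ideal.subset_span (by simp)
  have hsq {a b : R} (c : R) (ha : a ∈ I) (hb : b ∈ I) : c * (a * b) ∈ I ^ 2 :=
    Ideal.mul_mem_left _ c (sq I ▸ Ideal.mul_mem_mul ha hb)
  refine Ideal.mul_mem_of_forall_mul_mem_generators ?_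
  rintro g (rfl | rfl | rfl | rfl)
  · convert hsq (x * y) hx8y hx8y using 1; ring
  · convert hsq (x ^ 5) hxy4 hxy4 using 1; ring
  · convert hsq y hx8y hy5 using 1; ring
  · convert hsq (x ^ 4) hx10 hxy4 using 1; ring

namespace MvPolynomial

theorem monomial_one_mem_span_monomial_image_iff {σ R : Type*} [CommSemiring R] [Nontrivial R]
    {m : σ →₀ ℕ} {s : Set (σ →₀ ℕ)} :
    monomial m (1 : R) ∈ Ideal.span ((fun s => monomial s (1 : R)) '' s) ↔ ∃ si ∈ s, si ≤ m := by
  classical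
  simp [mem_ideal_span_monomial_image, support_monomial]

theorem X_pow_seven_mul_X_pow_three_notMem_span (F : Type*) [Field F] :
    (X 0 ^ 7 * X 1 ^ 3 : MvPolynomial (Fin 2) F) ∉
      Ideal.span {X 0 ^ 10, X 1 ^ 5, X 0 * X 1 ^ 4, X 0 ^ 8 * X 1} := by
  have hmonomial : ({X 0 ^ 10, X 1 ^ 5, X 0 * X 1 ^ 4, X 0 ^ 8 * X 1} :
      Set (MvPolynomial (Fin 2) F)) = (fun s => monomial s 1) '' {Finsupp.single 0 10,
        Finsupp.single 1 5, Finsupp.single 0 1 + Finsupp.single 1 4,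
        Finsupp.single 0 8 + Finsupp.single 1 1} := by
    simp [Set.image_insert_eq, X, monomial_pow, monomial_mul]
  rw [hmonomial]
  simp [X, monomial_pow, monomial_mul, monomial_one_mem_span_monomial_image_iff,
    Finsupp.le_def, Fin.forall_fin_two]

end MvPolynomial

/-- For `I = (X^10, Y^5, XY^4, X^8Y)` in `F[X,Y]`: `X^7Y^3·I ⊆ I^2` and `X^7Y^3 ∉ I`;
hence `X^7Y^3 ∈ ~I \ I` and `I` is not Ratliff-Rush closed. -/
theorem stmt_13 (F : Type*) [Field F]
    (X Y : MvPolynomial (Fin 2) F)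
    (hX : X = MvPolynomial.X 0) (hY : Y = MvPolynomial.X 1)
    (I : Ideal (MvPolynomial (Fin 2) F))
    (hI : I = Ideal.span {X ^ 10, Y ^ 5, X * Y ^ 4, X ^ 8 * Y}) :
    (∀ f ∈ I, X ^ 7 * Y ^ 3 * f ∈ I ^ 2) ∧
    X ^ 7 * Y ^ 3 ∉ I ∧
    X ^ 7 * Y ^ 3 ∈ rrPow I 1 ∧
    rrPow I 1 ≠ I := by
  have hmul : ∀ f ∈ I, X ^ 7 * Y ^ 3 * f ∈ I ^ 2 :=
    hI ▸ pow_seven_mul_pow_three_mul_mem_span_sq X Y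
  have hnot : X ^ 7 * Y ^ 3 ∉ I := by
    subst hI hX hY
    exact MvPolynomial.X_pow_seven_mul_X_pow_three_notMem_span F
  have hrr : X ^ 7 * Y ^ 3 ∈ rrPow I 1 := mem_rrPow_of_forall_mul_mem 1 (by simpa using hmul)
  exact ⟨hmul, hnot, hrr, fun h => hnot (h ▸ hrr)⟩
end

section
/- Let F be a field, n ≥ 2 an integer, R = F[X, Y, Z_1, …, Z_n], and I = (X^4, X^3Y, XY^3, Y^4) + (X^2Y^2)·(Z_1, …, Z_n). Then the Ratliff-Rush closure of I is ~I = (X,Y)^4; moreover the minimal number of generators of I is 4 + n, while the minimal number of generators of ~I is 5. In particular the minimal number of generators of a regular ideal can exceed that of its Ratliff-Rush closure. -/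
open MvPolynomial
open Finsupp (single)

theorem le_rrPow_one_of_mul_le {R : Type*} [CommRing R] {I M : Ideal R} (h : M * I ≤ I ^ 2) :
    M ≤ rrPow I 1 :=
  le_iSup_of_le 1 fun _ hf => Submodule.mem_colon.mpr fun _ hg =>
    h (Ideal.mul_mem_mul hf (pow_one I ▸ hg))

section MonomialIdeal

variable {σ R : Type*} [CommRing R] {x y : σ}

theorem Finsupp.eq_single_add_single_of_support_subset {e : σ →₀ ℕ} (hxy : x ≠ y)
    (he : ↑e.support ⊆ ({x, y} : Set σ)) : e = single x (e x) + single y (e y) := by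
  ext i
  by_cases hx : i = x
  · subst hx; simp [hxy]
  by_cases hy : i = y
  · subst hy; simp [hx]
  have : i ∉ e.support := fun hi => by simpa [hx, hy] using he hi
  simp_all [eq_comm]

theorem setOf_degree_eq_support_subset_pair (hxy : x ≠ y) (d : ℕ) :
    {e : σ →₀ ℕ | e.degree = d ∧ ↑e.support ⊆ ({x, y} : Set σ)} =
      Set.range fun a : Fin (d + 1) => single x (a : ℕ) + single y (d - a) := by
  ext e
  constructor
  · rintro ⟨rfl, he⟩
    have hdeg : e.degree = e x + e y := by
      conv_lhs => rw [Finsupp.eq_single_add_single_of_support_subset hxy he]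
      simp only [map_add, Finsupp.degree_single]
    refine ⟨⟨e x, by omega⟩, ?_⟩
    conv_rhs => rw [Finsupp.eq_single_add_single_of_support_subset hxy he]
    simp only [hdeg, Nat.add_sub_cancel_left]
  · rintro ⟨a, rfl⟩
    refine ⟨by simp only [map_add, Finsupp.degree_single]; omega, fun i hi => ?_⟩
    by_contra h
    simp only [Set.mem_insert_iff, Set.mem_singleton_iff, not_or] at h
    simp [Finsupp.single_eq_of_ne, h.1, h.2] at hi

theorem span_X_pair_pow (hxy : x ≠ y) (d : ℕ) :
    Ideal.span {X x, X y} ^ d = Ideal.span ((monomial · (1 : R)) ''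
      Set.range fun a : Fin (d + 1) => single x (a : ℕ) + single y (d - a)) := by
  rw [← Set.image_pair, Ideal.span, Submodule.span_pow, Finsupp.image_pow_eq_finsuppProd_image,
    setOf_degree_eq_support_subset_pair hxy]
  simp only [monomial_eq, C_1, one_mul]

theorem single_add_single_sub_antichain (hxy : x ≠ y) (d : ℕ) (a b : Fin (d + 1))
    (h : single x (a : ℕ) + single y (d - a) ≤ single x (b : ℕ) + single y (d - b)) : a = b := by
  have hx := h x
  have hy := h y
  simp [hxy, hxy.symm] at hx hy
  omega

theorem mem_span_X_pair_pow_iff (hxy : x ≠ y) {d : ℕ} {f : MvPolynomial σ R} :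
    f ∈ Ideal.span {X x, X y} ^ d ↔ ∀ e ∈ f.support, d ≤ e x + e y := by
  rw [span_X_pair_pow hxy, mem_ideal_span_monomial_image]
  refine forall₂_congr fun e _ => ⟨?_, fun h => ?_⟩
  · rintro ⟨_, ⟨a, rfl⟩, hle⟩
    have hx := hle x
    have hy := hle y
    simp [hxy, hxy.symm] at hx hy
    omega
  · refine ⟨_, ⟨⟨min d (e x), by omega⟩, rfl⟩, fun i => ?_⟩
    by_cases hx : i = x
    · subst hx; simp [hxy]
    by_cases hy : i = y
    · subst hy; simp [hx]; omega
    simp [Ne.symm hx, Ne.symm hy]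

theorem mem_span_X_pair_pow_of_mul_X_pow_mem (hxy : x ≠ y) {d k : ℕ} {f : MvPolynomial σ R}
    (h : f * X x ^ k ∈ Ideal.span {X x, X y} ^ (d + k)) : f ∈ Ideal.span {X x, X y} ^ d := by
  rw [mem_span_X_pair_pow_iff hxy] at h ⊢
  intro e he
  have hcoeff : coeff (e + single x k) (f * X x ^ k) = coeff e f := by
    rw [X_pow_eq_monomial, coeff_mul_monomial, mul_one]
  have := h _ (mem_support_iff.mpr (hcoeff ▸ mem_support_iff.mp he))
  simp [hxy.symm] at this
  omega

theorem rrPow_one_le_span_X_pair_pow (hxy : x ≠ y) {I : Ideal (MvPolynomial σ R)} {d : ℕ}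
    (hI : I ≤ Ideal.span {X x, X y} ^ d) (hX : X x ^ d ∈ I) :
    rrPow I 1 ≤ Ideal.span {X x, X y} ^ d := by
  refine iSup_le fun k f hf => mem_span_X_pair_pow_of_mul_X_pow_mem hxy (k := d * k) ?_
  have hmem : f * X x ^ (d * k) ∈ I ^ (1 + k) := by
    simpa [pow_mul] using Submodule.mem_colon.mp hf _ (Ideal.pow_mem_pow hX k)
  have := Ideal.pow_right_mono hI (1 + k) hmem
  rwa [← pow_mul, mul_add, mul_one] at this

theorem coeff_mul_of_mem_span_monomial {ι : Type*} {E : ι → σ →₀ ℕ}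
    (hE : ∀ i j, E i ≤ E j → i = j) {g : MvPolynomial σ R}
    (hg : g ∈ Ideal.span ((monomial · (1 : R)) '' Set.range E)) (r : MvPolynomial σ R) (i : ι) :
    coeff (E i) (r * g) = coeff 0 r * coeff (E i) g := by
  classical
  rw [coeff_mul, Finset.sum_eq_single_of_mem (0, E i) (by simp)]
  rintro ⟨u, v⟩ huv hne
  rw [Finset.HasAntidiagonal.mem_antidiagonal] at huv
  dsimp only
  suffices coeff v g = 0 by rw [this, mul_zero]
  by_contra hv
  obtain ⟨_, ⟨j, rfl⟩, hjv⟩ := mem_ideal_span_monomial_image.mp hg v (mem_support_iff.mpr hv)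
  have hvE : v ≤ E i := huv ▸ le_add_self
  obtain rfl := hE j i (hjv.trans hvE)
  obtain rfl : v = E j := le_antisymm hvE hjv
  exact hne (by simpa using huv)

end MonomialIdeal

section MinimalGenerators

variable {σ F ι : Type*} [Field F] [Fintype ι] {E : ι → σ →₀ ℕ}

theorem card_le_card_of_span_eq_span_monomial (hE : ∀ i j, E i ≤ E j → i = j)
    {s : Finset (MvPolynomial σ F)}
    (hs : Ideal.span (s : Set (MvPolynomial σ F)) = Ideal.span ((monomial · 1) '' Set.range E)) :
    Fintype.card ι ≤ s.card := by
  classical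
  let Φ : MvPolynomial σ F →ₗ[F] ι → F := LinearMap.pi fun i => lcoeff F (E i)
  have hΦ_mul : ∀ g ∈ s, ∀ r, Φ (r * g) = coeff 0 r • Φ g := fun g hg r =>
    funext fun i => coeff_mul_of_mem_span_monomial hE (hs ▸ Ideal.subset_span hg) r i
  have hΦ_monomial : ∀ i, Φ (monomial (E i) 1) = Pi.single i 1 := fun i => by
    funext j
    have hinj : Function.Injective E := fun i j h => hE i j h.le
    simp [Φ, coeff_monomial, Pi.single_apply, hinj.eq_iff, eq_comm]
  have hspan : Submodule.span F (s.image Φ : Set (ι → F)) = ⊤ := by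
    rw [eq_top_iff, ← (Pi.basisFun F ι).span_eq, Submodule.span_le]
    rintro _ ⟨i, rfl⟩
    have hi : monomial (E i) 1 ∈ Ideal.span (s : Set (MvPolynomial σ F)) :=
      hs ▸ Ideal.subset_span ⟨E i, ⟨i, rfl⟩, rfl⟩
    obtain ⟨c, -, hc⟩ := Submodule.mem_span_finset.mp hi
    rw [SetLike.mem_coe, Pi.basisFun_apply, ← hΦ_monomial, ← hc, map_sum]
    refine Submodule.sum_mem _ fun g hg => ?_
    rw [smul_eq_mul, hΦ_mul g hg]
    exact Submodule.smul_mem _ _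
      (Submodule.subset_span (Finset.mem_coe.mpr (Finset.mem_image_of_mem Φ hg)))
  calc Fintype.card ι = Module.finrank F (ι → F) :=
        (Module.finrank_fintype_fun_eq_card F).symm
    _ ≤ (s.image Φ).card := by
      rw [← finrank_top, ← hspan]
      exact finrank_span_finset_le_card _
    _ ≤ s.card := Finset.card_image_le

theorem isLeast_card_span_eq_span_monomial (hE : ∀ i j, E i ≤ E j → i = j) :
    IsLeast {k | ∃ s : Finset (MvPolynomial σ F), s.card = k ∧
      Ideal.span (s : Set (MvPolynomial σ F)) = Ideal.span ((monomial · 1) '' Set.range E)}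
      (Fintype.card ι) := by
  classical
  have hinj : Function.Injective fun i => (monomial (E i) (1 : F)) := fun i j h =>
    hE i j (monomial_left_injective one_ne_zero h).le
  refine ⟨⟨Finset.univ.image fun i => monomial (E i) 1, ?_, ?_⟩, ?_⟩
  · rw [Finset.card_image_of_injective _ hinj, Finset.card_univ]
  · rw [Finset.coe_image, Finset.coe_univ, Set.image_univ, ← Set.range_comp]
    rfl
  · rintro k ⟨s, rfl, hs⟩
    exact card_le_card_of_span_eq_span_monomial hE hs

end MinimalGenerators

section Example

variable {σ ι R : Type*} [CommRing R] {x y : σ} {z : ι → σ}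

noncomputable def exampleExponent (x y : σ) (z : ι → σ) : Fin 4 ⊕ ι → σ →₀ ℕ
  | .inl b => single x (![4, 3, 1, 0] b) + single y (4 - ![4, 3, 1, 0] b)
  | .inr j => single x 2 + single y 2 + single (z j) 1

theorem exampleExponent_antichain (hxy : x ≠ y) (hzx : ∀ j, z j ≠ x) (hzy : ∀ j, z j ≠ y)
    (hz : Function.Injective z) (i i' : Fin 4 ⊕ ι)
    (h : exampleExponent x y z i ≤ exampleExponent x y z i') : i = i' := by
  rcases i with b | j <;> rcases i' with c | k
  · have hx := h x
    simp only [exampleExponent, Finsupp.add_apply, Finsupp.single_eq_same,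
      Finsupp.single_eq_of_ne hxy, add_zero] at hx
    have hy := h y
    simp only [exampleExponent, Finsupp.add_apply, Finsupp.single_eq_same,
      Finsupp.single_eq_of_ne hxy.symm, zero_add] at hy
    fin_cases b <;> fin_cases c <;> simp_all
  · have hx := h x
    have hy := h y
    simp [exampleExponent, hxy, Finsupp.single_eq_of_ne (hzx k).symm,
      Finsupp.single_eq_of_ne (hzy k).symm] at hx hy
    fin_cases b <;> simp_all
  · have hzj := h (z j)
    simp [exampleExponent, hzx, hzy] at hzj
  · have hzj := h (z j)
    by_contra hjk
    have hne : z j ≠ z k := fun e => hjk (congrArg Sum.inr (hz e))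
    simp [exampleExponent, hzx, hzy, Finsupp.single_eq_of_ne hne] at hzj

theorem image_monomial_range_exampleExponent :
    (monomial · (1 : R)) '' Set.range (exampleExponent x y z) =
      {X x ^ 4, X x ^ 3 * X y, X x * X y ^ 3, X y ^ 4} ∪
        Set.range fun j => X x ^ 2 * X y ^ 2 * X (z j) := by
  rw [← Set.range_comp]
  ext p
  simp only [Set.mem_range, Sum.exists, Fin.exists_fin_succ, Function.comp_apply,
    exampleExponent, monomial_add_single, ← X_pow_eq_monomial]
  simp [eq_comm, or_assoc]

variable (R) in
noncomputable abbrev exampleIdeal (x y : σ) (z : ι → σ) : Ideal (MvPolynomial σ R) :=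
  Ideal.span ((monomial · 1) '' Set.range (exampleExponent x y z))

theorem exampleIdeal_le (hxy : x ≠ y) (hzx : ∀ j, z j ≠ x) (hzy : ∀ j, z j ≠ y) :
    exampleIdeal R x y z ≤ Ideal.span {X x, X y} ^ 4 := by
  rw [Ideal.span_le]
  rintro _ ⟨_, ⟨i, rfl⟩, rfl⟩
  rw [SetLike.mem_coe, mem_span_X_pair_pow_iff hxy]
  intro e he
  rw [Finset.mem_singleton.mp (support_monomial_subset he)]
  rcases i with b | j
  · fin_cases b <;> simp [exampleExponent, hxy, hxy.symm]
  · simp [exampleExponent, hxy, hxy.symm, Finsupp.single_eq_of_ne (hzx j).symm,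
      Finsupp.single_eq_of_ne (hzy j).symm]

theorem span_X_pair_pow_eight_le_exampleIdeal_sq (hxy : x ≠ y) :
    Ideal.span {X x, X y} ^ 8 ≤ exampleIdeal R x y z ^ 2 := by
  rw [span_X_pair_pow hxy, Ideal.span_le]
  rintro _ ⟨_, ⟨a, rfl⟩, rfl⟩
  dsimp only
  obtain ⟨b, c, hx, hy⟩ : ∃ b c : Fin 4, ![4, 3, 1, 0] b + ![4, 3, 1, 0] c = (a : ℕ) ∧
      (4 - ![4, 3, 1, 0] b) + (4 - ![4, 3, 1, 0] c) = 8 - (a : ℕ) := by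
    revert a; decide
  have hmul : monomial (single x (a : ℕ) + single y (8 - (a : ℕ))) (1 : R) =
      monomial (exampleExponent x y z (.inl b)) 1 *
        monomial (exampleExponent x y z (.inl c)) 1 := by
    rw [monomial_mul, one_mul, ← hy, ← hx, Finsupp.single_add, Finsupp.single_add,
      add_add_add_comm]
    rfl
  rw [SetLike.mem_coe, hmul, pow_two]
  exact Ideal.mul_mem_mul (Ideal.subset_span ⟨_, ⟨_, rfl⟩, rfl⟩)
    (Ideal.subset_span ⟨_, ⟨_, rfl⟩, rfl⟩)

theorem rrPow_exampleIdeal (hxy : x ≠ y) (hzx : ∀ j, z j ≠ x) (hzy : ∀ j, z j ≠ y) :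
    rrPow (exampleIdeal R x y z) 1 = Ideal.span {X x, X y} ^ 4 := by
  have hI := exampleIdeal_le (R := R) hxy hzx hzy
  have hX : X x ^ 4 ∈ exampleIdeal R x y z :=
    Ideal.subset_span ⟨_, ⟨.inl 0, rfl⟩, by simp [exampleExponent, X_pow_eq_monomial]⟩
  refine le_antisymm (rrPow_one_le_span_X_pair_pow hxy hI hX) (le_rrPow_one_of_mul_le ?_)
  calc Ideal.span {X x, X y} ^ 4 * exampleIdeal R x y z
      ≤ Ideal.span {X x, X y} ^ 4 * Ideal.span {X x, X y} ^ 4 := Ideal.mul_mono_right hI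
    _ = Ideal.span {X x, X y} ^ 8 := by rw [← pow_add]
    _ ≤ exampleIdeal R x y z ^ 2 := span_X_pair_pow_eight_le_exampleIdeal_sq hxy

end Example

/-- Let `R = F[X, Y, Z_1, …, Z_n]` with `n ≥ 2` and
`I = (X^4, X^3Y, XY^3, Y^4) + (X^2Y^2)(Z_1, …, Z_n)`.  Then `~I = (X,Y)^4`, the minimal
number of generators of `I` is `4 + n`, and the minimal number of generators of `~I`
is `5`.  (So the minimal number of generators of a regular ideal can exceed that of
its Ratliff-Rush closure.) -/
theorem stmt_19 (F : Type*) [Field F] (n : ℕ)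
    (X Y : MvPolynomial (Fin (n + 2)) F)
    (hX : X = MvPolynomial.X ⟨0, by omega⟩) (hY : Y = MvPolynomial.X ⟨1, by omega⟩)
    (Z : Fin n → MvPolynomial (Fin (n + 2)) F)
    (hZ : ∀ j : Fin n, Z j = MvPolynomial.X ⟨(j : ℕ) + 2, by omega⟩)
    (I : Ideal (MvPolynomial (Fin (n + 2)) F))
    (hI : I = Ideal.span
      (({X ^ 4, X ^ 3 * Y, X * Y ^ 3, Y ^ 4} : Set (MvPolynomial (Fin (n + 2)) F)) ∪
        Set.range fun j : Fin n => X ^ 2 * Y ^ 2 * Z j)) :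
    rrPow I 1 = Ideal.span {X, Y} ^ 4 ∧
    IsLeast {k : ℕ | ∃ s : Finset (MvPolynomial (Fin (n + 2)) F),
      s.card = k ∧ Ideal.span (s : Set (MvPolynomial (Fin (n + 2)) F)) = I} (4 + n) ∧
    IsLeast {k : ℕ | ∃ s : Finset (MvPolynomial (Fin (n + 2)) F),
      s.card = k ∧ Ideal.span (s : Set (MvPolynomial (Fin (n + 2)) F)) =
        Ideal.span {X, Y} ^ 4} 5 := by
  set x : Fin (n + 2) := ⟨0, by omega⟩
  set y : Fin (n + 2) := ⟨1, by omega⟩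
  set z : Fin n → Fin (n + 2) := fun j => ⟨(j : ℕ) + 2, by omega⟩
  have hxy : x ≠ y := by simp [x, y]
  have hzx : ∀ j, z j ≠ x := fun j => by simp [x, z, Fin.ext_iff]
  have hzy : ∀ j, z j ≠ y := fun j => by simp [y, z, Fin.ext_iff]
  have hz : Function.Injective z := fun j k h => Fin.ext (by simpa [z, Fin.ext_iff] using h)
  obtain rfl : Z = fun j => MvPolynomial.X (z j) := funext hZ
  subst hX hY hI
  rw [← image_monomial_range_exampleExponent]
  refine ⟨rrPow_exampleIdeal hxy hzx hzy, ?_, ?_⟩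
  · simpa using isLeast_card_span_eq_span_monomial (exampleExponent_antichain hxy hzx hzy hz)
  · rw [span_X_pair_pow hxy]
    simpa using isLeast_card_span_eq_span_monomial (single_add_single_sub_antichain hxy 4)
end
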